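/- arXiv:2106.15607 — 2 statements merged into one kernel-verified Lean document; each statement's English description precedes it below -/
import Mathlib

section
/- Let $k \in \mathbb{N}$ with $k \geq 2$. There exists a constant $C = C(k)$ such that for every rational $p/q$ in lowest terms with $q \geq 1$, every real $x$, and every positive integer $n$ satisfying $n^k |\beta| \leq 1$ where $\beta := x - p/q$, one has $\Big| \sum_{l=1}^{n} e(l^k x) - \frac{\xi_{p/q}}{q} \sum_{l=1}^{n} e(l^k \beta) \Big| \leq C q$. -/
/-- `e t = exp(2πit)`. -/
noncomputable def e (t : ℝ) : ℂ := Complex.exp (2 * Real.pi * Complex.I * t)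

/-- The Gauss-type sum `ξ_{p/q} = ∑_{t=0}^{q-1} e(t^k p/q)`. -/
noncomputable def xi (k : ℕ) (p : ℤ) (q : ℕ) : ℂ :=
  ∑ t ∈ Finset.range q, e ((t : ℝ) ^ k * p / q)

/-!
The weight `l ↦ e(l^k p/q)` is `q`-periodic with mean `ξ_{p/q}/q` over a period, so after
subtracting that mean its partial sums stay bounded by `2q`. Writing `e(l^k x)` as
`e(l^k p/q) e(l^k β)` and summing by parts against the slowly varying factor `e(l^k β)`, whose
total variation up to `n` is at most `2π n^k |β| ≤ 2π`, gives the bound with `C = 2(1 + 2π)`.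
-/

open Finset

theorem sum_Icc_one_eq_sum_range {M : Type*} [AddCommMonoid M] (f : ℕ → M) (n : ℕ) :
    ∑ l ∈ Icc 1 n, f l = ∑ i ∈ range n, f (i + 1) := by
  rw [range_eq_Ico, sum_Ico_add' f 0 n 1]; rfl

theorem norm_sum_range_smul_le {𝕜 E : Type*} [NormedField 𝕜] [SeminormedAddCommGroup E]
    [NormedSpace 𝕜 E] (f : ℕ → 𝕜) (g : ℕ → E) {B : ℝ}
    (hg : ∀ m, ‖∑ i ∈ range m, g i‖ ≤ B) (n : ℕ) :
    ‖∑ i ∈ range n, f i • g i‖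
      ≤ B * (‖f (n - 1)‖ + ∑ i ∈ range (n - 1), ‖f (i + 1) - f i‖) := by
  rw [sum_range_by_parts, mul_add, mul_sum]
  refine (norm_sub_le _ _).trans (add_le_add ?_ ((norm_sum_le _ _).trans ?_))
  · exact (norm_smul_le _ _).trans (by rw [mul_comm]; gcongr; exact hg n)
  · refine sum_le_sum fun i _ => (norm_smul_le _ _).trans ?_
    rw [mul_comm]
    gcongr
    exact hg (i + 1)

theorem Function.Periodic.sum_range_add {E : Type*} [AddCommMonoid E] {f : ℕ → E} {q : ℕ}
    (hf : Function.Periodic f q) (m : ℕ) :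
    ∑ i ∈ range (m + q), f i = ∑ i ∈ range m, f i + ∑ i ∈ range q, f i := by
  induction m with
  | zero => simp
  | succ m ih =>
    rw [Nat.add_right_comm, sum_range_succ, ih, sum_range_succ, hf m, add_right_comm]

theorem Function.Periodic.sum_range_comp_succ {M : Type*} [AddCancelCommMonoid M] {f : ℕ → M}
    {q : ℕ} (hf : Function.Periodic f q) :
    ∑ i ∈ range q, f (i + 1) = ∑ i ∈ range q, f i := by
  have h : f q = f 0 := by simpa using hf 0
  exact add_right_cancel ((sum_range_succ' f q).symm.trans (by rw [sum_range_succ, h]))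

theorem Function.Periodic.norm_sum_range_le {E : Type*} [SeminormedAddCommGroup E]
    {f : ℕ → E} {q : ℕ} (hf : Function.Periodic f q) (hq : 0 < q)
    (hsum : ∑ i ∈ range q, f i = 0) {B : ℝ} (hB : ∀ i, ‖f i‖ ≤ B) (m : ℕ) :
    ‖∑ i ∈ range m, f i‖ ≤ q * B := by
  have hS : Function.Periodic (fun m => ∑ i ∈ range m, f i) q := fun m => by
    simp only [hf.sum_range_add, hsum, add_zero]
  rw [← hS.map_mod_nat]
  calc ‖∑ i ∈ range (m % q), f i‖ ≤ (m % q : ℕ) * B := by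
        simpa using norm_sum_le_of_le (range (m % q)) fun i _ => hB i
    _ ≤ q * B := by
        gcongr
        · exact (norm_nonneg _).trans (hB 0)
        · exact (Nat.mod_lt m hq).le

theorem e_eq_exp (t : ℝ) : e t = Complex.exp (Complex.I * (2 * Real.pi * t : ℝ)) := by
  rw [e]; push_cast; ring_nf

theorem norm_e (t : ℝ) : ‖e t‖ = 1 := by
  rw [e_eq_exp, Complex.norm_exp_I_mul_ofReal]

theorem e_add (s t : ℝ) : e (s + t) = e s * e t := by
  rw [e, e, e, ← Complex.exp_add]; push_cast; ring_nf

theorem e_add_intCast (t : ℝ) (m : ℤ) : e (t + m) = e t := by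
  have h : e m = 1 := by
    rw [e, ← Complex.exp_int_mul_two_pi_mul_I m]; push_cast; ring_nf
  rw [e_add, h, mul_one]

theorem norm_e_sub_e_le (s t : ℝ) : ‖e s - e t‖ ≤ 2 * Real.pi * |s - t| := by
  have h : e s - e t = e t * (e (s - t) - 1) := by rw [mul_sub, ← e_add]; ring_nf
  rw [h, norm_mul, norm_e, one_mul, e_eq_exp]
  refine Real.norm_exp_I_mul_ofReal_sub_one_le.trans_eq ?_
  rw [Real.norm_eq_abs, abs_mul, abs_of_pos Real.two_pi_pos]

theorem sum_norm_e_mul_sub_le {ψ : ℕ → ℝ} (hψ : Monotone ψ) (β : ℝ) (N : ℕ) :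
    ∑ i ∈ range N, ‖e (ψ (i + 1) * β) - e (ψ i * β)‖
      ≤ 2 * Real.pi * |β| * (ψ N - ψ 0) := by
  calc ∑ i ∈ range N, ‖e (ψ (i + 1) * β) - e (ψ i * β)‖
      ≤ ∑ i ∈ range N, 2 * Real.pi * |β| * (ψ (i + 1) - ψ i) := by
        refine sum_le_sum fun i _ => (norm_e_sub_e_le _ _).trans_eq ?_
        rw [← sub_mul, abs_mul, abs_of_nonneg (sub_nonneg.2 (hψ i.le_succ))]
        ring
    _ = 2 * Real.pi * |β| * (ψ N - ψ 0) := by rw [← mul_sum, sum_range_sub]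

theorem periodic_e_pow_mul_div (k : ℕ) (p : ℤ) (q : ℕ) :
    Function.Periodic (fun l : ℕ => e ((l : ℝ) ^ k * p / q)) q := by
  intro l
  rcases Nat.eq_zero_or_pos q with rfl | hq
  · simp
  obtain ⟨m, hm⟩ : (q : ℤ) ∣ ((l + q : ℕ) : ℤ) ^ k - (l : ℤ) ^ k := by
    simpa using sub_dvd_pow_sub_pow ((l + q : ℕ) : ℤ) (l : ℤ) k
  have hm' : ((l + q : ℕ) : ℝ) ^ k = (l : ℝ) ^ k + q * m := by
    exact_mod_cast sub_eq_iff_eq_add'.1 hm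
  have : ((l + q : ℕ) : ℝ) ^ k * p / q = (l : ℝ) ^ k * p / q + ((m * p : ℤ) : ℝ) := by
    rw [hm']; push_cast; field_simp
  simp only [this, e_add_intCast]

theorem norm_xi_le (k : ℕ) (p : ℤ) (q : ℕ) : ‖xi k p q‖ ≤ q := by
  simpa [xi, norm_e] using norm_sum_le (range q) fun t : ℕ => e ((t : ℝ) ^ k * p / q)

theorem norm_sum_range_e_succ_pow_sub_le (k : ℕ) (p : ℤ) {q : ℕ} (hq : 0 < q) (m : ℕ) :
    ‖∑ i ∈ range m, (e (((i + 1 : ℕ) : ℝ) ^ k * p / q) - xi k p q / q)‖ ≤ q * 2 := by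
  have ha := periodic_e_pow_mul_div k p q
  have hv : Function.Periodic (fun i => e (((i + 1 : ℕ) : ℝ) ^ k * p / q) - xi k p q / q) q :=
    fun i => by simp only [Nat.add_right_comm i q 1, ha (i + 1)]
  refine hv.norm_sum_range_le hq ?_ (fun i => (norm_sub_le _ _).trans ?_) m
  · rw [sum_sub_distrib, ha.sum_range_comp_succ, ← xi, sum_const, card_range, nsmul_eq_mul,
      mul_div_cancel₀ _ (Nat.cast_ne_zero.2 hq.ne'), sub_self]
  · have hq₀ : (0 : ℝ) < q := by exact_mod_cast hq
    rw [norm_e, norm_div, Complex.norm_natCast]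
    linarith [(div_le_one hq₀).2 (norm_xi_le k p q)]

theorem sum_norm_e_succ_pow_mul_sub_le (k : ℕ) (β : ℝ) {n : ℕ} (hn : 0 < n) :
    ∑ i ∈ range (n - 1), ‖e (((i + 1 + 1 : ℕ) : ℝ) ^ k * β) - e (((i + 1 : ℕ) : ℝ) ^ k * β)‖
      ≤ 2 * Real.pi * (n ^ k * |β|) := by
  have hψ : Monotone fun i : ℕ => ((i + 1 : ℕ) : ℝ) ^ k := fun i j hij =>
    pow_le_pow_left₀ (by positivity) (by exact_mod_cast Nat.succ_le_succ hij) k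
  have h := sum_norm_e_mul_sub_le hψ β (n - 1)
  rw [Nat.sub_add_cancel hn, zero_add, Nat.cast_one, one_pow] at h
  nlinarith [Real.pi_pos, abs_nonneg β]

theorem sum_Icc_e_pow_mul_sub_eq (k : ℕ) (p : ℤ) (q : ℕ) (x : ℝ) (n : ℕ) :
    (∑ l ∈ Icc 1 n, e ((l : ℝ) ^ k * x))
        - xi k p q / q * ∑ l ∈ Icc 1 n, e ((l : ℝ) ^ k * (x - p / q))
      = ∑ i ∈ range n, e (((i + 1 : ℕ) : ℝ) ^ k * (x - p / q))
          • (e (((i + 1 : ℕ) : ℝ) ^ k * p / q) - xi k p q / q) := by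
  simp only [sum_Icc_one_eq_sum_range, mul_sum, ← sum_sub_distrib, smul_eq_mul]
  refine sum_congr rfl fun i _ => ?_
  have hx : ((i + 1 : ℕ) : ℝ) ^ k * x
      = ((i + 1 : ℕ) : ℝ) ^ k * p / q + ((i + 1 : ℕ) : ℝ) ^ k * (x - p / q) := by ring
  rw [hx, e_add]
  ring

theorem gauss_sum_rational_approximation_general (k : ℕ) :
    ∃ C : ℝ, ∀ (p : ℤ) (q : ℕ), 1 ≤ q → Int.gcd p q = 1 →
      ∀ x : ℝ, ∀ n : ℕ, 0 < n → (n : ℝ) ^ k * |x - (p : ℝ) / q| ≤ 1 →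
        ‖(∑ l ∈ Finset.Icc 1 n, e ((l : ℝ) ^ k * x))
            - xi k p q / q * ∑ l ∈ Finset.Icc 1 n, e ((l : ℝ) ^ k * (x - (p : ℝ) / q))‖
          ≤ C * q := by
  refine ⟨2 * (1 + 2 * Real.pi), fun p q hq _ x n hn hnβ => ?_⟩
  rw [sum_Icc_e_pow_mul_sub_eq]
  refine (norm_sum_range_smul_le _ _ (norm_sum_range_e_succ_pow_sub_le k p hq) n).trans ?_
  calc _ ≤ (q : ℝ) * 2 * (1 + 2 * Real.pi * 1) := by
        gcongr
        · exact (norm_e _).le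
        · exact (sum_norm_e_succ_pow_mul_sub_le k _ hn).trans (by gcongr)
    _ = 2 * (1 + 2 * Real.pi) * q := by ring

/-- For `k ≥ 2` there is `C = C(k)` such that for `p/q` in lowest terms, real `x`, and
`n ≥ 1` with `n^k |x - p/q| ≤ 1`, writing `β = x - p/q`, one has
`|∑_{l=1}^n e(l^k x) - (ξ_{p/q}/q) ∑_{l=1}^n e(l^k β)| ≤ C q`. -/
theorem gauss_sum_rational_approximation (k : ℕ) (hk : 2 ≤ k) :
    ∃ C : ℝ, ∀ (p : ℤ) (q : ℕ), 1 ≤ q → Int.gcd p q = 1 →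
      ∀ x : ℝ, ∀ n : ℕ, 0 < n → (n : ℝ) ^ k * |x - (p : ℝ) / q| ≤ 1 →
        ‖(∑ l ∈ Finset.Icc 1 n, e ((l : ℝ) ^ k * x))
            - xi k p q / q * ∑ l ∈ Finset.Icc 1 n, e ((l : ℝ) ^ k * (x - (p : ℝ) / q))‖
          ≤ C * q :=
  gauss_sum_rational_approximation_general k
end

section
/- Let $k \in \mathbb{N}$ with $k \geq 2$. There exists a constant $C = C(k)$ such that for every real $\beta > 0$ and every integer $m \geq 1$ with $m \leq N := \lfloor \beta^{-1/k} \rfloor$, one has $\Big| \int_{m}^{N} \frac{e(y^k \beta)}{y}\, dy \; - \; \frac{1}{k} \ln^{+}\big( \beta^{-1} m^{-k} \big) \Big| \leq C$, where $\ln^{+} y := \max\{\ln y, 0\}$. -/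
/-! On `[m, N]` we have `y ^ k * β ≤ 1`, so `e (y ^ k * β) = 1 + O(y ^ k * β)` and the integral
differs from `∫_m^N dy / y = log (N / m)` by at most `2π β N ^ k / k ≤ 2π / k`. On the other hand
`(1 / k) ln⁺ (β⁻¹ m⁻ᵏ) = log β^(-1/k) - log m`, and `N = ⌊β^(-1/k)⌋` is within a factor `2` of
`β^(-1/k)`, so the two logarithms differ by at most `log 2`. -/

open Real Set MeasureTheory

lemma norm_e_sub_one_le (t : ℝ) : ‖e t - 1‖ ≤ 2 * π * |t| := by
  have h : (2 * π * Complex.I * t : ℂ) = Complex.I * ((2 * π * t : ℝ) : ℂ) := by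
    push_cast; ring
  rw [e, h]
  calc _ ≤ ‖2 * π * t‖ := Real.norm_exp_I_mul_ofReal_sub_one_le
    _ = 2 * π * |t| := by rw [Real.norm_eq_abs, abs_mul, abs_of_pos (by positivity)]

lemma integral_ofReal_inv {a b : ℝ} (ha : 0 < a) (hb : 0 < b) :
    ∫ y in a..b, (y : ℂ)⁻¹ = Real.log (b / a) := by
  simp_rw [← Complex.ofReal_inv]
  rw [intervalIntegral.integral_ofReal, integral_inv_of_pos ha hb]

lemma norm_integral_e_div_sub_log_le {k : ℕ} (hk : 1 ≤ k) {β a b : ℝ} (hβ : 0 ≤ β)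
    (ha : 0 < a) (hab : a ≤ b) :
    ‖(∫ y in a..b, e (y ^ k * β) / y) - Real.log (b / a)‖ ≤ 2 * π * β * (b ^ k - a ^ k) / k := by
  obtain ⟨n, rfl⟩ := Nat.exists_eq_add_of_le' hk
  have hne : ∀ y ∈ uIcc a b, (y : ℂ) ≠ 0 := fun y hy =>
    Complex.ofReal_ne_zero.2 (ha.trans_le (uIcc_of_le hab ▸ hy).1).ne'
  have hint_e : IntervalIntegrable (fun y : ℝ => e (y ^ (n + 1) * β) / y) volume a b :=
    (ContinuousOn.div (by unfold e; fun_prop) (by fun_prop) hne).intervalIntegrable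
  have hint_inv : IntervalIntegrable (fun y : ℝ => (y : ℂ)⁻¹) volume a b :=
    (ContinuousOn.inv₀ (by fun_prop) hne).intervalIntegrable
  have hpoint : ∀ y ∈ Ioc a b, ‖e (y ^ (n + 1) * β) / y - (y : ℂ)⁻¹‖ ≤ 2 * π * β * y ^ n := by
    intro y hy
    have hy : 0 < y := ha.trans hy.1
    rw [← one_div, ← sub_div, norm_div, Complex.norm_real, Real.norm_of_nonneg hy.le,
      div_le_iff₀ hy]
    calc _ ≤ 2 * π * |y ^ (n + 1) * β| := norm_e_sub_one_le _
      _ = 2 * π * β * y ^ n * y := by rw [abs_of_nonneg (by positivity)]; ring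
  calc _ = ‖∫ y in a..b, (e (y ^ (n + 1) * β) / y - (y : ℂ)⁻¹)‖ := by
        rw [intervalIntegral.integral_sub hint_e hint_inv, integral_ofReal_inv ha (ha.trans_le hab)]
    _ ≤ ∫ y in a..b, 2 * π * β * y ^ n :=
        intervalIntegral.norm_integral_le_of_norm_le hab (ae_of_all _ hpoint)
          (Continuous.intervalIntegrable (by fun_prop) _ _)
    _ = _ := by rw [intervalIntegral.integral_const_mul, integral_pow]; push_cast; ring

lemma norm_integral_e_div_sub_log_le_of_mul_pow_le_one {k : ℕ} (hk : 1 ≤ k) {β a b : ℝ}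
    (hβ : 0 ≤ β) (ha : 0 < a) (hab : a ≤ b) (hβb : β * b ^ k ≤ 1) :
    ‖(∫ y in a..b, e (y ^ k * β) / y) - Real.log (b / a)‖ ≤ 2 * π / k := by
  calc _ ≤ 2 * π * β * (b ^ k - a ^ k) / k := norm_integral_e_div_sub_log_le hk hβ ha hab
    _ ≤ 2 * π / k := by
      have hβab : β * (b ^ k - a ^ k) ≤ 1 := by nlinarith [mul_nonneg hβ (pow_pos ha k).le]
      refine div_le_div_of_nonneg_right ?_ (Nat.cast_nonneg k)
      simpa [mul_assoc] using mul_le_mul_of_nonneg_left hβab (by positivity : 0 ≤ 2 * π)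

lemma mul_pow_le_one_of_le_rpow_neg_one_div {β : ℝ} (hβ : 0 < β) {k : ℕ} (hk : k ≠ 0) {x : ℝ}
    (hx : 0 ≤ x) (hxβ : x ≤ β ^ (-(1 : ℝ) / k)) : β * x ^ k ≤ 1 := by
  calc β * x ^ k ≤ β * (β ^ (-(1 : ℝ) / k)) ^ k := by gcongr
    _ = 1 := by
      rw [← Real.rpow_natCast, ← Real.rpow_mul hβ.le, div_mul_cancel₀ _ (by positivity),
        Real.rpow_neg_one, mul_inv_cancel₀ hβ.ne']

lemma abs_log_floor_sub_log_le {B : ℝ} (hB : 1 ≤ B) :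
    |Real.log ⌊B⌋₊ - Real.log B| ≤ Real.log 2 := by
  have hN : (1 : ℝ) ≤ ⌊B⌋₊ := by exact_mod_cast Nat.one_le_floor_iff B |>.2 hB
  have hNB : (⌊B⌋₊ : ℝ) ≤ B := Nat.floor_le (by positivity)
  have hB2N : B ≤ 2 * ⌊B⌋₊ := by linarith [Nat.lt_floor_add_one B]
  have hlow := Real.log_le_log (by positivity) hNB
  have hhigh := (Real.log_le_log (by positivity : (0 : ℝ) < B) hB2N).trans_eq
    (Real.log_mul two_ne_zero (zero_lt_one.trans_le hN).ne')
  rw [abs_sub_comm, abs_of_nonneg (sub_nonneg.2 hlow)]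
  linarith

lemma log_inv_mul_zpow_neg {β x : ℝ} (hβ : 0 < β) (hx : 0 < x) {k : ℕ} (hk : k ≠ 0) :
    Real.log (β⁻¹ * x ^ (-(k : ℤ))) = k * (Real.log (β ^ (-(1 : ℝ) / k)) - Real.log x) := by
  rw [Real.log_mul (by positivity) (by positivity), Real.log_inv, Real.log_zpow,
    Real.log_rpow hβ]
  field_simp
  push_cast
  ring

lemma one_div_mul_max_log_inv_mul_zpow_neg {β x : ℝ} (hβ : 0 < β) (hx : 0 < x) {k : ℕ}
    (hk : k ≠ 0) (hxβ : x ≤ β ^ (-(1 : ℝ) / k)) :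
    (1 / k : ℝ) * max (Real.log (β⁻¹ * x ^ (-(k : ℤ)))) 0
      = Real.log (β ^ (-(1 : ℝ) / k)) - Real.log x := by
  have hlog : Real.log x ≤ Real.log (β ^ (-(1 : ℝ) / k)) := Real.log_le_log hx hxβ
  rw [log_inv_mul_zpow_neg hβ hx hk,
    max_eq_left (mul_nonneg (Nat.cast_nonneg k) (sub_nonneg.2 hlog)), ← mul_assoc,
    one_div_mul_cancel (Nat.cast_ne_zero.2 hk), one_mul]

/-- For `k ≥ 2` there is `C = C(k)` such that for every `β > 0` and every integer
`1 ≤ m ≤ N := ⌊β^{-1/k}⌋`, one has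
`|∫_m^N e(y^k β)/y dy - (1/k) ln⁺(β⁻¹ m^{-k})| ≤ C`. -/
theorem integral_asymptotics (k : ℕ) (hk : 2 ≤ k) :
    ∃ C : ℝ, ∀ β : ℝ, 0 < β → ∀ m : ℕ, 1 ≤ m → m ≤ ⌊β ^ (-(1 : ℝ) / k)⌋₊ →
      ‖(∫ y in (m : ℝ)..(⌊β ^ (-(1 : ℝ) / k)⌋₊ : ℝ), e (y ^ k * β) / (y : ℂ))
          - ((1 / k : ℝ) * max (Real.log (β⁻¹ * (m : ℝ) ^ (-(k : ℤ)))) 0 : ℝ)‖ ≤ C := by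
  refine ⟨2 * π / k + Real.log 2, fun β hβ m hm hmN => ?_⟩
  set B := β ^ (-(1 : ℝ) / k)
  set N := ⌊B⌋₊
  have hk0 : k ≠ 0 := by omega
  have hm1 : (1 : ℝ) ≤ m := by exact_mod_cast hm
  have hmN : (m : ℝ) ≤ N := by exact_mod_cast hmN
  have hN0 : (0 : ℝ) < N := zero_lt_one.trans_le (hm1.trans hmN)
  have hNB : (N : ℝ) ≤ B := Nat.floor_le (by positivity)
  rw [one_div_mul_max_log_inv_mul_zpow_neg hβ (by positivity) hk0 (hmN.trans hNB)]
  calc _ ≤ ‖(∫ y in (m : ℝ)..N, e (y ^ k * β) / y) - Real.log (N / m)‖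
        + ‖((Real.log (N / m) : ℝ) : ℂ) - (Real.log B - Real.log m : ℝ)‖ :=
        norm_sub_le_norm_sub_add_norm_sub _ _ _
    _ ≤ 2 * π / k + Real.log 2 := by
      refine add_le_add (norm_integral_e_div_sub_log_le_of_mul_pow_le_one (by omega) hβ.le
        (by positivity) hmN (mul_pow_le_one_of_le_rpow_neg_one_div hβ hk0 hN0.le hNB)) ?_
      rw [← Complex.ofReal_sub, Complex.norm_real, Real.norm_eq_abs,
        Real.log_div hN0.ne' (by positivity)]
      simpa using abs_log_floor_sub_log_le (hm1.trans (hmN.trans hNB))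
end
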